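/- Let A = k[[x,y]] be the formal power series ring over an algebraically closed field k of characteristic p > 0, and let D be the derivation D = a·x·∂/∂x + b·y·∂/∂y with a, b ∈ F_p, a + b = 0, and a ≠ 0. Then the ring of D-invariants A^D equals k[[x^p, xy, y^p]], which is isomorphic to k[[u,v,w]]/(uw - v^p), a rational double point of type A_{p-1}. -/

import Mathlib

/-!
Since `b = -a`, the operator `D` multiplies the coefficient of `x^i y^j` by `a (i - j)`, so a
series is `D`-invariant iff it is supported on exponents with `i ≡ j (mod p)`; these form the
monoid generated by `(p, 0)`, `(1, 1)` and `(0, p)`.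

The substitution `u ↦ x^p, v ↦ xy, w ↦ y^p` sends `u^i v^j w^l` to `x^(pi+j) y^(j+pl)`, so the
coefficient of the image of `F` at an exponent is the sum of the coefficients of `F` over its
fibre, and the image consists of the series supported on that monoid. The fibre through a triple
`e` with `e 0 = 0` or `e 2 = 0` is the tower `e + t (1, -p, 1)`. Summing the coefficients of `F`
up the towers gives `F = (uw - v^p) Q + R` with `R` supported on the bottoms of the towers, where
it records the coefficients of the image of `F`; hence the kernel is generated by `uw - v^p`.
-/

open MvPowerSeries

namespace MvPowerSeries

theorem eq_zero_iff_of_coeff_eq_mul {σ R : Type*} [Semiring R] [NoZeroDivisors R]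
    {D : MvPowerSeries σ R → MvPowerSeries σ R} (w : (σ →₀ ℕ) → R)
    (hD : ∀ f d, coeff d (D f) = w d * coeff d f) (f : MvPowerSeries σ R) :
    D f = 0 ↔ ∀ d, coeff d f ≠ 0 → w d = 0 := by
  simp only [MvPowerSeries.ext_iff, hD, map_zero, mul_eq_zero]
  exact forall_congr' fun d ↦ or_iff_not_imp_right

variable {σ τ R : Type*} [CommRing R] (m : σ → τ →₀ ℕ)

theorem hasSubst_monomial_one [Finite σ] (hm : ∀ s, m s ≠ 0) :
    HasSubst fun s ↦ monomial (m s) (1 : R) :=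
  hasSubst_of_constantCoeff_zero fun s ↦ by
    classical
    rw [← coeff_zero_eq_constantCoeff_apply, coeff_monomial, if_neg (hm s).symm]

theorem finsuppProd_monomial_one_pow (d : σ →₀ ℕ) :
    (d.prod fun s n ↦ monomial (m s) (1 : R) ^ n) =
      monomial (Finsupp.linearCombination ℕ m d) 1 := by
  simp [Finsupp.prod, Finsupp.linearCombination_apply, Finsupp.sum, monomial_pow, prod_monomial]

variable {m}

theorem coeff_subst_monomial_one (ha : HasSubst fun s ↦ monomial (m s) (1 : R))
    (f : MvPowerSeries σ R) (e : τ →₀ ℕ) :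
    coeff e (subst (fun s ↦ monomial (m s) (1 : R)) f) =
      ∑ᶠ d ∈ Finsupp.linearCombination ℕ m ⁻¹' {e}, coeff d f := by
  classical
  rw [coeff_subst ha]
  refine finsum_congr fun d ↦ ?_
  rw [finsuppProd_monomial_one_pow, coeff_monomial, finsum_eq_if]
  split_ifs <;> simp_all [eq_comm]

theorem range_subst_monomial_one (ha : HasSubst fun s ↦ monomial (m s) (1 : R)) :
    Set.range (subst (fun s ↦ monomial (m s) (1 : R)) : MvPowerSeries σ R → _) =
      {f | ∀ e, coeff e f ≠ 0 → e ∈ AddSubmonoid.closure (Set.range m)} := by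
  classical
  ext f
  simp only [Set.mem_range, Set.mem_ofPred_eq, AddSubmonoid.mem_closure_range_iff,
    ← Finsupp.linearCombination_apply]
  constructor
  · rintro ⟨F, rfl⟩ e he
    rw [coeff_subst_monomial_one ha] at he
    obtain ⟨d, hd, -⟩ := exists_ne_zero_of_finsum_mem_ne_zero he
    exact ⟨d, hd.symm⟩
  · intro hf
    let g := Function.invFun (Finsupp.linearCombination ℕ m)
    let F : MvPowerSeries σ R := fun d ↦
      if g (Finsupp.linearCombination ℕ m d) = d then coeff (Finsupp.linearCombination ℕ m d) f
      else 0
    have coeff_F (d : σ →₀ ℕ) : coeff d F = if g (Finsupp.linearCombination ℕ m d) = d then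
        coeff (Finsupp.linearCombination ℕ m d) f else 0 := rfl
    refine ⟨F, ?_⟩
    ext e
    rw [coeff_subst_monomial_one ha, finsum_eq_single _ (g e), finsum_eq_if]
    · by_cases he : ∃ d, Finsupp.linearCombination ℕ m d = e
      · have hge : Finsupp.linearCombination ℕ m (g e) = e := Function.invFun_eq he
        simp [coeff_F, hge]
      · rw [if_neg (by simpa using fun h ↦ he ⟨g e, h⟩)]
        by_contra hfe
        obtain ⟨d, hd⟩ := hf e (Ne.symm hfe)
        exact he ⟨d, hd.symm⟩
    · intro d hd
      rw [finsum_eq_if]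
      split_ifs with hde
      · rw [Set.mem_preimage, Set.mem_singleton_iff] at hde
        rw [coeff_F, hde, if_neg hd.symm]
      · rfl

end MvPowerSeries

theorem ZMod.castHom_mul_add_mul_eq_zero_iff {k : Type*} [Field k] {p : ℕ} [Fact p.Prime]
    [CharP k p] {a b : ZMod p} (hab : a + b = 0) (ha : a ≠ 0) (x y : ZMod p) :
    ZMod.castHom (dvd_refl p) k (a * x + b * y) = 0 ↔ x = y := by
  rw [map_eq_zero_iff _ (ZMod.castHom (dvd_refl p) k).injective, eq_neg_of_add_eq_zero_right hab,
    neg_mul, ← sub_eq_add_neg, ← mul_sub, mul_eq_zero, sub_eq_zero, or_iff_right ha]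

namespace RationalDoublePointA

open Finsupp (single)

variable (p : ℕ)

noncomputable def toricExponents : Fin 3 → Fin 2 →₀ ℕ :=
  ![single 0 p, single 0 1 + single 1 1, single 1 p]

theorem range_toricExponents :
    Set.range (toricExponents p) = {single 0 p, single 0 1 + single 1 1, single 1 p} := by
  rw [toricExponents, Matrix.range_cons, Matrix.range_cons, Matrix.range_cons_empty,
    Set.singleton_union, Set.singleton_union]

theorem linearCombination_toricExponents (d : Fin 3 →₀ ℕ) :
    Finsupp.linearCombination ℕ (toricExponents p) d =
      single 0 (p * d 0 + d 1) + single 1 (d 1 + p * d 2) := by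
  ext i
  fin_cases i <;> simp [toricExponents, Finsupp.linearCombination_apply, Finsupp.sum_fintype,
    Fin.sum_univ_three, mul_comm]

theorem linearCombination_toricExponents_eq_iff (d e : Fin 3 →₀ ℕ) :
    Finsupp.linearCombination ℕ (toricExponents p) d =
        Finsupp.linearCombination ℕ (toricExponents p) e ↔
      p * d 0 + d 1 = p * e 0 + e 1 ∧ d 1 + p * d 2 = e 1 + p * e 2 := by
  simp [Finsupp.ext_iff, Fin.forall_fin_two, linearCombination_toricExponents]

theorem mem_closure_toricExponents_iff (d : Fin 2 →₀ ℕ) :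
    d ∈ AddSubmonoid.closure (Set.range (toricExponents p)) ↔ (d 0 : ZMod p) = d 1 := by
  simp only [AddSubmonoid.mem_closure_range_iff, ← Finsupp.linearCombination_apply]
  constructor
  · rintro ⟨c, rfl⟩
    simp [linearCombination_toricExponents]
  · intro h
    have hmod : d 0 ≡ d 1 [MOD p] := (ZMod.natCast_eq_natCast_iff _ _ _).mp h
    rcases le_total (d 0) (d 1) with hle | hle
    · have hdvd : p ∣ d 1 - d 0 := (Nat.modEq_iff_dvd' hle).mp hmod
      refine ⟨single 1 (d 0) + single 2 ((d 1 - d 0) / p), ?_⟩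
      ext i
      fin_cases i <;> simp [linearCombination_toricExponents, Nat.mul_div_cancel' hdvd]
      omega
    · have hdvd : p ∣ d 0 - d 1 := (Nat.modEq_iff_dvd' hle).mp hmod.symm
      refine ⟨single 0 ((d 0 - d 1) / p) + single 1 (d 1), ?_⟩
      ext i
      fin_cases i <;> simp [linearCombination_toricExponents, Nat.mul_div_cancel' hdvd]
      omega

noncomputable def tower (e : Fin 3 →₀ ℕ) (t : ℕ) : Fin 3 →₀ ℕ :=
  e + t • (single 0 1 + single 2 1) - t • single 1 p

@[simp] theorem tower_apply_zero (e : Fin 3 →₀ ℕ) (t : ℕ) : tower p e t 0 = e 0 + t := by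
  simp [tower]

@[simp] theorem tower_apply_one (e : Fin 3 →₀ ℕ) (t : ℕ) : tower p e t 1 = e 1 - t * p := by
  simp [tower]

@[simp] theorem tower_apply_two (e : Fin 3 →₀ ℕ) (t : ℕ) : tower p e t 2 = e 2 + t := by
  simp [tower]

section Division

variable {R : Type*} [CommRing R]

noncomputable def towerSum (F : MvPowerSeries (Fin 3) R) (e : Fin 3 →₀ ℕ) : R :=
  ∑ t ∈ Finset.range (e 1 / p + 1), coeff (tower p e t) F

noncomputable def towerQuotient (F : MvPowerSeries (Fin 3) R) : MvPowerSeries (Fin 3) R :=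
  fun e ↦ towerSum p F (e + (single 0 1 + single 2 1))

noncomputable def towerRemainder (F : MvPowerSeries (Fin 3) R) : MvPowerSeries (Fin 3) R :=
  fun e ↦ if single 0 1 + single 2 1 ≤ e then 0 else towerSum p F e

theorem coeff_towerQuotient (F : MvPowerSeries (Fin 3) R) (e : Fin 3 →₀ ℕ) :
    coeff e (towerQuotient p F) = towerSum p F (e + (single 0 1 + single 2 1)) :=
  rfl

theorem coeff_towerRemainder (F : MvPowerSeries (Fin 3) R) (e : Fin 3 →₀ ℕ) :
    coeff e (towerRemainder p F) =
      if single 0 1 + single 2 1 ≤ e then 0 else towerSum p F e :=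
  rfl

variable [NeZero p]

theorem towerSum_eq_coeff_add (F : MvPowerSeries (Fin 3) R) (e : Fin 3 →₀ ℕ) :
    towerSum p F e = coeff e F +
      if single 1 p ≤ e then towerSum p F (e - single 1 p + (single 0 1 + single 2 1)) else 0 := by
  have hp := Nat.pos_of_neZero p
  rw [towerSum, Finset.sum_range_succ', add_comm, show tower p e 0 = e by simp [tower]]
  congr 1
  split_ifs with hpe
  · have hpe : p ≤ e 1 := by simpa using hpe 1
    have hlen : (e - single 1 p + (single 0 1 + single 2 1) : Fin 3 →₀ ℕ) 1 / p + 1 = e 1 / p := by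
      simp [Nat.div_eq_sub_div hp hpe]
    rw [towerSum, hlen]
    refine Finset.sum_congr rfl fun t _ ↦ congrArg (coeff · F) ?_
    ext i
    fin_cases i <;> simp [add_mul] <;> omega
  · have hpe : e 1 < p := by
      contrapose! hpe
      intro i
      fin_cases i <;> simp [hpe]
    simp [Nat.div_eq_of_lt hpe]

theorem X_mul_X_sub_X_pow_mul_towerQuotient (F : MvPowerSeries (Fin 3) R) :
    (X 0 * X 2 - X 1 ^ p) * towerQuotient p F = F - towerRemainder p F := by
  have hX02 : (X 0 * X 2 : MvPowerSeries (Fin 3) R) = monomial (single 0 1 + single 2 1) 1 := by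
    rw [X_def, X_def, monomial_mul_monomial, one_mul]
  ext e
  have hT := towerSum_eq_coeff_add p F e
  rw [sub_mul, hX02, X_pow_eq, map_sub, map_sub, coeff_monomial_mul, coeff_monomial_mul,
    coeff_towerQuotient, coeff_towerQuotient, coeff_towerRemainder, one_mul, one_mul]
  split_ifs at hT ⊢ with hu <;> (try rw [tsub_add_cancel_of_le hu]) <;> linear_combination hT

theorem preimage_linearCombination_toricExponents {e : Fin 3 →₀ ℕ}
    (he : ¬ single 0 1 + single 2 1 ≤ e) :
    Finsupp.linearCombination ℕ (toricExponents p) ⁻¹'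
        {Finsupp.linearCombination ℕ (toricExponents p) e} =
      tower p e '' Finset.range (e 1 / p + 1) := by
  have he : e 0 = 0 ∨ e 2 = 0 := by
    simp [Finsupp.le_def, Fin.forall_fin_succ] at he
    omega
  have hp := Nat.pos_of_neZero p
  ext d
  rw [Set.mem_preimage, Set.mem_singleton_iff, linearCombination_toricExponents_eq_iff]
  simp only [Set.mem_image, Finset.coe_range, Set.mem_Iio, Nat.lt_succ_iff,
    Nat.le_div_iff_mul_le hp]
  constructor
  · rintro ⟨h0, h2⟩
    have hcancel : d 0 + e 2 = e 0 + d 2 := Nat.eq_of_mul_eq_mul_left hp (by linarith)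
    obtain ⟨t, ht⟩ : ∃ t, d 0 = e 0 + t := ⟨d 0 - e 0, by omega⟩
    have hpt : p * d 0 = p * e 0 + t * p := by rw [ht, mul_add, mul_comm p t]
    refine ⟨t, by omega, ?_⟩
    ext i
    fin_cases i <;> simp <;> omega
  · rintro ⟨t, ht, rfl⟩
    simp only [tower_apply_zero, tower_apply_one, tower_apply_two, mul_add, mul_comm p t]
    omega

end Division

variable (R : Type*) [CommRing R] [NeZero p]

theorem hasSubst_toricExponents : HasSubst fun i ↦ monomial (toricExponents p i) (1 : R) :=
  hasSubst_monomial_one _ fun i ↦ by fin_cases i <;> simp [toricExponents, NeZero.ne p]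

noncomputable def toricSubst : MvPowerSeries (Fin 3) R →ₐ[R] MvPowerSeries (Fin 2) R :=
  substAlgHom (hasSubst_toricExponents p R)

theorem range_toricSubst : Set.range (toricSubst p R) =
    {f | ∀ d, coeff d f ≠ 0 → d ∈ AddSubmonoid.closure (Set.range (toricExponents p))} := by
  rw [toricSubst, coe_substAlgHom]
  exact range_subst_monomial_one (hasSubst_toricExponents p R)

theorem toricSubst_X_mul_X_sub_X_pow : toricSubst p R (X 0 * X 2 - X 1 ^ p) = 0 := by
  have hexp : toricExponents p 0 + toricExponents p 2 = p • toricExponents p 1 := by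
    ext i; fin_cases i <;> simp [toricExponents]
  simp only [toricSubst, map_sub, map_mul, map_pow, substAlgHom_X, monomial_mul_monomial,
    monomial_pow, hexp, one_pow, mul_one, sub_self]

variable {R}

theorem towerSum_eq_coeff_toricSubst (F : MvPowerSeries (Fin 3) R) {e : Fin 3 →₀ ℕ}
    (he : ¬ single 0 1 + single 2 1 ≤ e) :
    towerSum p F e =
      coeff (Finsupp.linearCombination ℕ (toricExponents p) e) (toricSubst p R F) := by
  have hinj : Set.InjOn (tower p e) (Finset.range (e 1 / p + 1)) := fun s _ t _ hst ↦ by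
    simpa using congrArg (· 0) hst
  rw [toricSubst, substAlgHom_apply, coeff_subst_monomial_one (hasSubst_toricExponents p R),
    preimage_linearCombination_toricExponents p he, finsum_mem_image hinj, finsum_mem_coe_finset,
    towerSum]

theorem towerRemainder_eq_zero {F : MvPowerSeries (Fin 3) R} (hF : toricSubst p R F = 0) :
    towerRemainder p F = 0 := by
  ext e
  rw [coeff_towerRemainder]
  split_ifs with he
  · rfl
  · rw [towerSum_eq_coeff_toricSubst p F he, hF, map_zero, map_zero]

theorem ker_toricSubst :
    RingHom.ker (toricSubst p R) = Ideal.span {X 0 * X 2 - X 1 ^ p} := by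
  refine le_antisymm (fun F hF ↦ Ideal.mem_span_singleton.mpr ⟨towerQuotient p F, ?_⟩) ?_
  · rw [X_mul_X_sub_X_pow_mul_towerQuotient, towerRemainder_eq_zero p (RingHom.mem_ker.mp hF),
      sub_zero]
  · rw [Ideal.span_le, Set.singleton_subset_iff]
    exact toricSubst_X_mul_X_sub_X_pow p R

end RationalDoublePointA

open RationalDoublePointA

theorem invariants_of_symplectic_derivation_Apminus1_general
    (k : Type*) [Field k] (p : ℕ) [Fact p.Prime] [CharP k p]
    (a b : ZMod p) (hab : a + b = 0) (ha : a ≠ 0)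
    (D : MvPowerSeries (Fin 2) k →ₗ[k] MvPowerSeries (Fin 2) k)
    (hD : ∀ (f : MvPowerSeries (Fin 2) k) (d : Fin 2 →₀ ℕ),
      coeff d (D f) =
        (ZMod.castHom (dvd_refl p) k) (a * (d 0 : ZMod p) + b * (d 1 : ZMod p)) *
          coeff d f) :
    ({f : MvPowerSeries (Fin 2) k | D f = 0} =
      {f : MvPowerSeries (Fin 2) k | ∀ d : Fin 2 →₀ ℕ, coeff d f ≠ 0 →
        d ∈ AddSubmonoid.closure
          ({Finsupp.single 0 p, Finsupp.single 0 1 + Finsupp.single 1 1,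
            Finsupp.single 1 p} : Set (Fin 2 →₀ ℕ))}) ∧
    ∃ φ : (MvPowerSeries (Fin 3) k ⧸
            Ideal.span {(X 0 * X 2 - (X 1) ^ p : MvPowerSeries (Fin 3) k)}) →ₐ[k]
          MvPowerSeries (Fin 2) k,
      Function.Injective φ ∧ Set.range φ = {f : MvPowerSeries (Fin 2) k | D f = 0} := by
  have invariants : {f : MvPowerSeries (Fin 2) k | D f = 0} =
      {f | ∀ d, coeff d f ≠ 0 → d ∈ AddSubmonoid.closure (Set.range (toricExponents p))} := by
    ext f
    simp only [Set.mem_ofPred_eq, eq_zero_iff_of_coeff_eq_mul _ hD,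
      ZMod.castHom_mul_add_mul_eq_zero_iff hab ha, mem_closure_toricExponents_iff]
  have hker : ∀ F ∈ Ideal.span {X 0 * X 2 - X 1 ^ p}, toricSubst p k F = 0 := fun F hF ↦ by
    rwa [← ker_toricSubst, RingHom.mem_ker] at hF
  refine ⟨range_toricExponents p ▸ invariants, Ideal.Quotient.liftₐ _ (toricSubst p k) hker,
    RingHom.lift_injective_of_ker_le_ideal _ hker (ker_toricSubst p).le, ?_⟩
  rw [invariants, ← range_toricSubst]
  exact (Ideal.Quotient.mk_surjective.range_comp _).symm

/-- Let `A = k[[x,y]]` with `k` algebraically closed of characteristic `p > 0`, and let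
`D = a·x·∂/∂x + b·y·∂/∂y` with `a, b ∈ 𝔽_p`, `a + b = 0`, `a ≠ 0`; concretely, `D` is the
`k`-linear operator multiplying the coefficient of `x^i y^j` by `a·i + b·j ∈ 𝔽_p ⊆ k`.
Then the invariant ring `A^D = {f | D f = 0}` equals `k[[x^p, xy, y^p]]` (the series
supported on the monoid of exponents generated by `(p,0)`, `(1,1)`, `(0,p)`), and it is
isomorphic as a `k`-algebra to `k[[u,v,w]]/(uw - v^p)`, a rational double point of type
`A_{p-1}`. -/
theorem invariants_of_symplectic_derivation_Apminus1
    (k : Type*) [Field k] [IsAlgClosed k] (p : ℕ) [Fact p.Prime] [CharP k p]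
    (a b : ZMod p) (hab : a + b = 0) (ha : a ≠ 0)
    (D : MvPowerSeries (Fin 2) k →ₗ[k] MvPowerSeries (Fin 2) k)
    (hD : ∀ (f : MvPowerSeries (Fin 2) k) (d : Fin 2 →₀ ℕ),
      coeff d (D f) =
        (ZMod.castHom (dvd_refl p) k) (a * (d 0 : ZMod p) + b * (d 1 : ZMod p)) *
          coeff d f) :
    ({f : MvPowerSeries (Fin 2) k | D f = 0} =
      {f : MvPowerSeries (Fin 2) k | ∀ d : Fin 2 →₀ ℕ, coeff d f ≠ 0 →
        d ∈ AddSubmonoid.closure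
          ({Finsupp.single 0 p, Finsupp.single 0 1 + Finsupp.single 1 1,
            Finsupp.single 1 p} : Set (Fin 2 →₀ ℕ))}) ∧
    ∃ φ : (MvPowerSeries (Fin 3) k ⧸
            Ideal.span {(X 0 * X 2 - (X 1) ^ p : MvPowerSeries (Fin 3) k)}) →ₐ[k]
          MvPowerSeries (Fin 2) k,
      Function.Injective φ ∧ Set.range φ = {f : MvPowerSeries (Fin 2) k | D f = 0} :=
  invariants_of_symplectic_derivation_Apminus1_general k p a b hab ha D hD
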